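/- arXiv:2408.06208 — 2 statements merged into one kernel-verified Lean document; each statement's English description precedes it below -/
import Mathlib

section
/- Let V : ℕ → ℝ≥0, η ∈ [0,1), ρ ∈ [η,1), and w : ℕ → ℝ≥0. Suppose there exists M ≥ 1 such that for every t ≥ M and every window length m with M ≤ m ≤ t one has V(t) ≤ ρ^m · V(t−m) + Σ_{j=t−m}^{t−1} η^{t−j−1} w(j), and moreover for every l with 0 ≤ l < M one has V(l) ≤ 4 η^l V(0) + Σ_{j=0}^{l−1} η^{l−j−1} w(j). If time t can be partitioned backwards into intervals each of length at least M (each interval of length m_i with M ≤ m_i), then V(t) ≤ 4 ρ^t V(0) + Σ_{q=0}^{t−1} ρ^{t−q−1} w(q). -/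
/-!
The right-hand side `B t = c ρ^t V₀ + Σ_{q<t} ρ^{t-q-1} w q` of the claim satisfies the window
recursion `B t = ρ^m B (t - m) + Σ_{t-m ≤ j < t} ρ^{t-j-1} w j` with equality, and replacing `η`
by the larger rate `ρ` only increases the discounted disturbance sums. So the initial estimate
gives `V ≤ B` on the first, short interval, and the window estimate propagates it along the
partition one window at a time.
-/

open Finset

namespace IntervalConcatenation

def decayBound (c ρ V₀ : ℝ) (w : ℕ → ℝ) (t : ℕ) : ℝ :=
  c * ρ ^ t * V₀ + ∑ q ∈ range t, ρ ^ (t - q - 1) * w q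

variable {η ρ : ℝ} {w : ℕ → ℝ}

lemma sum_pow_mul_le_sum_pow_mul (hη : 0 ≤ η) (hηρ : η ≤ ρ) (hw : ∀ j, 0 ≤ w j)
    (S : Finset ℕ) (e : ℕ → ℕ) :
    ∑ j ∈ S, η ^ e j * w j ≤ ∑ j ∈ S, ρ ^ e j * w j :=
  sum_le_sum fun j _ => mul_le_mul_of_nonneg_right (pow_le_pow_left₀ hη hηρ _) (hw j)

lemma decayBound_le_decayBound {c V₀ : ℝ} (hc : 0 ≤ c) (hV₀ : 0 ≤ V₀)
    (hη : 0 ≤ η) (hηρ : η ≤ ρ) (hw : ∀ j, 0 ≤ w j) (t : ℕ) :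
    decayBound c η V₀ w t ≤ decayBound c ρ V₀ w t := by
  have hpow : c * η ^ t * V₀ ≤ c * ρ ^ t * V₀ := by gcongr
  exact add_le_add hpow (sum_pow_mul_le_sum_pow_mul hη hηρ hw _ _)

lemma decayBound_eq_pow_mul_add (c V₀ : ℝ) {t' t : ℕ} (h : t' ≤ t) :
    decayBound c ρ V₀ w t =
      ρ ^ (t - t') * decayBound c ρ V₀ w t' + ∑ j ∈ Ico t' t, ρ ^ (t - j - 1) * w j := by
  have hsum : ρ ^ (t - t') * ∑ q ∈ range t', ρ ^ (t' - q - 1) * w q =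
      ∑ q ∈ range t', ρ ^ (t - q - 1) * w q := by
    rw [mul_sum]
    refine sum_congr rfl fun q hq => ?_
    rw [← mul_assoc, ← pow_add, show t - t' + (t' - q - 1) = t - q - 1 by
      have := mem_range.mp hq; omega]
  have hhead : ρ ^ (t - t') * (c * ρ ^ t' * V₀) = c * ρ ^ t * V₀ := by
    rw [← Nat.sub_add_cancel h, pow_add, Nat.add_sub_cancel]
    ring
  rw [decayBound, decayBound, mul_add, hsum, hhead, add_assoc, sum_range_add_sum_Ico _ h]

lemma le_decayBound_of_le_pow_mul_add {V : ℕ → ℝ} {c V₀ : ℝ}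
    (hη : 0 ≤ η) (hηρ : η ≤ ρ) (hw : ∀ j, 0 ≤ w j) {t' t : ℕ} (h : t' ≤ t)
    (hprev : V t' ≤ decayBound c ρ V₀ w t')
    (hwindow : V t ≤ ρ ^ (t - t') * V t' + ∑ j ∈ Ico t' t, η ^ (t - j - 1) * w j) :
    V t ≤ decayBound c ρ V₀ w t := by
  have hρ : 0 ≤ ρ := hη.trans hηρ
  calc V t ≤ ρ ^ (t - t') * V t' + ∑ j ∈ Ico t' t, η ^ (t - j - 1) * w j := hwindow
    _ ≤ ρ ^ (t - t') * decayBound c ρ V₀ w t' + ∑ j ∈ Ico t' t, ρ ^ (t - j - 1) * w j :=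
      add_le_add (mul_le_mul_of_nonneg_left hprev (pow_nonneg hρ _))
        (sum_pow_mul_le_sum_pow_mul hη hηρ hw _ _)
    _ = decayBound c ρ V₀ w t := (decayBound_eq_pow_mul_add c V₀ h).symm

end IntervalConcatenation

open IntervalConcatenation in
theorem stmt_6_general (V w : ℕ → ℝ) (η ρ : ℝ)
    (hη0 : 0 ≤ η) (hηρ : η ≤ ρ)
    (hV : ∀ s, 0 ≤ V s) (hw : ∀ j, 0 ≤ w j)
    (M : ℕ)
    (hstep : ∀ t m, M ≤ t → M ≤ m → m ≤ t →
      V t ≤ ρ ^ m * V (t - m) + ∑ j ∈ Finset.Ico (t - m) t, η ^ (t - j - 1) * w j)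
    (hinit : ∀ l, l < M →
      V l ≤ 4 * η ^ l * V 0 + ∑ j ∈ Finset.Ico 0 l, η ^ (l - j - 1) * w j)
    (t k : ℕ) (s : ℕ → ℕ) (hs0 : s 0 = t) (hsk : s k < M)
    (hdec : ∀ i, i < k → s (i + 1) + M ≤ s i) :
    V t ≤ 4 * ρ ^ t * V 0 + ∑ q ∈ Finset.range t, ρ ^ (t - q - 1) * w q := by
  show V t ≤ decayBound 4 ρ (V 0) w t
  induction k generalizing t s with
  | zero =>
    subst hs0
    have hshort := hinit (s 0) hsk
    rw [← range_eq_Ico] at hshort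
    exact hshort.trans (decayBound_le_decayBound (by norm_num) (hV 0) hη0 hηρ hw _)
  | succ k ih =>
    have hprev := ih (s 1) (fun i => s (i + 1)) rfl hsk fun i hi => hdec (i + 1) (by omega)
    have hgap : s 1 + M ≤ t := hs0 ▸ hdec 0 k.succ_pos
    have hwindow := hstep t (t - s 1) (by omega) (by omega) (Nat.sub_le t (s 1))
    rw [Nat.sub_sub_self (by omega)] at hwindow
    exact le_decayBound_of_le_pow_mul_add hη0 hηρ hw (by omega) hprev hwindow

/-- Interval-concatenation argument (proof of Theorem 1).  Let `V : ℕ → ℝ≥0`,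
`η ∈ [0,1)`, `ρ ∈ [η,1)`, `w : ℕ → ℝ≥0`, and suppose there is `M ≥ 1` such that
for every `t ≥ M` and window length `m` with `M ≤ m ≤ t`,
`V(t) ≤ ρ^m·V(t−m) + Σ_{j=t−m}^{t−1} η^{t−j−1} w(j)`, and for every `l < M`,
`V(l) ≤ 4η^l V(0) + Σ_{j=0}^{l−1} η^{l−j−1} w(j)`.  If time `t` can be partitioned
backwards into intervals each of length at least `M` (witnessed by the decreasing
sequence `s` with `s 0 = t`, `s k < M` and `s (i+1) + M ≤ s i` for `i < k`), then
`V(t) ≤ 4ρ^t V(0) + Σ_{q=0}^{t−1} ρ^{t−q−1} w(q)`. -/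
theorem stmt_6 (V w : ℕ → ℝ) (η ρ : ℝ)
    (hη0 : 0 ≤ η) (hη1 : η < 1) (hηρ : η ≤ ρ) (hρ1 : ρ < 1)
    (hV : ∀ s, 0 ≤ V s) (hw : ∀ j, 0 ≤ w j)
    (M : ℕ) (hM : 1 ≤ M)
    (hstep : ∀ t m, M ≤ t → M ≤ m → m ≤ t →
      V t ≤ ρ ^ m * V (t - m) + ∑ j ∈ Finset.Ico (t - m) t, η ^ (t - j - 1) * w j)
    (hinit : ∀ l, l < M →
      V l ≤ 4 * η ^ l * V 0 + ∑ j ∈ Finset.Ico 0 l, η ^ (l - j - 1) * w j)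
    (t k : ℕ) (s : ℕ → ℕ) (hs0 : s 0 = t) (hsk : s k < M)
    (hdec : ∀ i, i < k → s (i + 1) + M ≤ s i) :
    V t ≤ 4 * ρ ^ t * V 0 + ∑ q ∈ Finset.range t, ρ ^ (t - q - 1) * w q :=
  stmt_6_general V w η ρ hη0 hηρ hV hw M hstep hinit t k s hs0 hsk hdec
end

section
/- Let η ∈ (0,1) and let δ, m ∈ ℕ with δ ≤ m. Suppose a cost J(x̂, ŵ, ŷ, t) decomposes as J = η^m A + (α+1)(Σ_{j=t−m}^{t−1} η^{t−j−1} 2 W_j + Σ_{j=t−m}^{t−δ−1} η^{t−j−1} Y_j) and the terms with indices j ≥ t−δ vanish at the optimum (W*_j = 0 for j ∈ [t−δ, t−1]). Then the optimal cost at time t equals η^δ times the optimal cost of the corresponding problem at time t−δ with horizon m−δ: J*(t) = η^δ · J*(t−δ). -/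
/-- Cost-scaling identity in the proof of Proposition 1.  Over a decision space `ι`,
let the cost at time `t` (horizon `m`) be
`J_t z = η^m A(z) + (α+1)(Σ_{j=t−m}^{t−1} η^{t−j−1} 2W_j(z) + Σ_{j=t−m}^{t−δ−1} η^{t−j−1} Y_j(z))`
and the cost at time `t−δ` (horizon `m−δ`) be
`J_{t−δ} z = η^{m−δ} A(z) + (α+1)(Σ_{j=t−m}^{t−δ−1} η^{t−δ−j−1} 2W_j(z) + Σ_{j=t−m}^{t−δ−1} η^{t−δ−j−1} Y_j(z))`.
If `z⋆` minimizes `J_t` and the tail disturbance terms vanish at the optimum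
(`W_j(z⋆) = 0` for `j ∈ [t−δ, t−1]`), and tail disturbances can be zeroed without
affecting the remaining terms, then the optimal cost at time `t` equals `η^δ` times
the optimal cost at time `t−δ`: `J_t z⋆ = η^δ · min J_{t−δ}`. -/
theorem stmt_19 {ι : Type*} (η α : ℝ) (hη0 : 0 < η) (hη1 : η < 1) (hα : 0 ≤ α)
    (t δ m : ℕ) (hδm : δ ≤ m) (hmt : m ≤ t)
    (A : ι → ℝ) (W Y : ι → ℕ → ℝ)
    (hA : ∀ z, 0 ≤ A z) (hW : ∀ z j, 0 ≤ W z j) (hY : ∀ z j, 0 ≤ Y z j)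
    (Jt Jtδ : ι → ℝ)
    (hJt : ∀ z, Jt z = η ^ m * A z
        + (α + 1) * ((∑ j ∈ Finset.Ico (t - m) t, η ^ (t - j - 1) * (2 * W z j))
          + ∑ j ∈ Finset.Ico (t - m) (t - δ), η ^ (t - j - 1) * Y z j))
    (hJtδ : ∀ z, Jtδ z = η ^ (m - δ) * A z
        + (α + 1) * ((∑ j ∈ Finset.Ico (t - m) (t - δ), η ^ (t - δ - j - 1) * (2 * W z j))
          + ∑ j ∈ Finset.Ico (t - m) (t - δ), η ^ (t - δ - j - 1) * Y z j))
    (mod : ι → ι)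
    (hmod : ∀ z, A (mod z) = A z
        ∧ (∀ j, j < t - δ → W (mod z) j = W z j ∧ Y (mod z) j = Y z j)
        ∧ (∀ j, t - δ ≤ j → j < t → W (mod z) j = 0)
        ∧ (∀ j, j < t - δ → Y (mod z) j = Y z j))
    (zs : ι) (hopt : ∀ z, Jt zs ≤ Jt z)
    (htail : ∀ j, t - δ ≤ j → j < t → W zs j = 0) :
    ∃ r, IsLeast (Set.range Jtδ) r ∧ Jt zs = η ^ δ * r := by

  have hts : t - m ≤ t - δ := Nat.sub_le_sub_left hδm t
  have key : ∀ z, (∀ j, t - δ ≤ j → j < t → W z j = 0) →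
      Jt z = η ^ δ * Jtδ z := by
    intro z hz
    rw [hJt, hJtδ]
    rw [← Finset.sum_Ico_consecutive (fun j => η ^ (t - j - 1) * (2 * W z j)) hts (Nat.sub_le t δ)]
    have h0 : ∑ j ∈ Finset.Ico (t - δ) t, η ^ (t - j - 1) * (2 * W z j) = 0 := by
      apply Finset.sum_eq_zero
      intro j hj
      rw [Finset.mem_Ico] at hj
      rw [hz j hj.1 hj.2]; ring
    rw [h0, add_zero]
    have hpow : ∀ j ∈ Finset.Ico (t - m) (t - δ),
        η ^ (t - j - 1) = η ^ δ * η ^ (t - δ - j - 1) := by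
      intro j hj
      rw [Finset.mem_Ico] at hj
      rw [← pow_add]
      congr 1
      omega
    have e1 : ∑ j ∈ Finset.Ico (t - m) (t - δ), η ^ (t - j - 1) * (2 * W z j)
        = η ^ δ * ∑ j ∈ Finset.Ico (t - m) (t - δ), η ^ (t - δ - j - 1) * (2 * W z j) := by
      rw [Finset.mul_sum]
      refine Finset.sum_congr rfl fun j hj => ?_
      rw [hpow j hj]; ring
    have e2 : ∑ j ∈ Finset.Ico (t - m) (t - δ), η ^ (t - j - 1) * Y z j
        = η ^ δ * ∑ j ∈ Finset.Ico (t - m) (t - δ), η ^ (t - δ - j - 1) * Y z j := by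
      rw [Finset.mul_sum]
      refine Finset.sum_congr rfl fun j hj => ?_
      rw [hpow j hj]; ring
    have e3 : η ^ m = η ^ δ * η ^ (m - δ) := by
      rw [← pow_add]; congr 1; omega
    rw [e1, e2, e3]; ring
  have hmodeq : ∀ z, Jtδ (mod z) = Jtδ z := by
    intro z
    obtain ⟨hA', hWY', _, hY'⟩ := hmod z
    have s1 : ∑ j ∈ Finset.Ico (t - m) (t - δ), η ^ (t - δ - j - 1) * (2 * W (mod z) j)
        = ∑ j ∈ Finset.Ico (t - m) (t - δ), η ^ (t - δ - j - 1) * (2 * W z j) := by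
      refine Finset.sum_congr rfl fun j hj => ?_
      rw [Finset.mem_Ico] at hj
      rw [(hWY' j hj.2).1]
    have s2 : ∑ j ∈ Finset.Ico (t - m) (t - δ), η ^ (t - δ - j - 1) * Y (mod z) j
        = ∑ j ∈ Finset.Ico (t - m) (t - δ), η ^ (t - δ - j - 1) * Y z j := by
      refine Finset.sum_congr rfl fun j hj => ?_
      rw [Finset.mem_Ico] at hj
      rw [hY' j hj.2]
    rw [hJtδ, hJtδ, hA', s1, s2]
  refine ⟨Jtδ zs, ⟨⟨zs, rfl⟩, ?_⟩, key zs htail⟩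
  rintro _ ⟨z, rfl⟩
  have h1 : Jt zs = η ^ δ * Jtδ zs := key zs htail
  have h2 : Jt (mod z) = η ^ δ * Jtδ z := by
    rw [key (mod z) (hmod z).2.2.1, hmodeq z]
  have h3 := hopt (mod z)
  rw [h1, h2] at h3
  exact le_of_mul_le_mul_left h3 (pow_pos hη0 δ)
end
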